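/- arXiv:2511.20125 — 2 statements merged into one kernel-verified Lean document; each statement's English description precedes it below -/
import Mathlib

section
/- Let τ ≥ 1 be a natural number, let u be a distinguished vertex of V, and let G be a graph on V in which u is isolated and every vertex other than u has degree exactly τ. Let G' be obtained from G by adding the edge {u, v} for every vertex v ≠ u, and let n = |V| − 1. Then NaiveClip(G, τ) = G, NaiveClip(G', τ) has no edges, and consequently d_edge(NaiveClip(G, τ), NaiveClip(G', τ)) = nτ/2. In particular, naive clipping is not distance-preserving between node-neighboring graphs. -/
open scoped symmDiff

variable {V : Type*}

noncomputable section

/-- Degree of a vertex `v` in `G`. -/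
def deg [Fintype V] (G : SimpleGraph V) (v : V) : ℕ :=
  (G.neighborSet v).ncard

/-- Maximum degree of `G`. -/
def maxDeg [Fintype V] (G : SimpleGraph V) : ℕ :=
  Finset.univ.sup (deg G)

/-- Number of vertices of `G` with degree at least `τ`. -/
def Ntau [Fintype V] (G : SimpleGraph V) (τ : ℕ) : ℕ :=
  {v : V | τ ≤ deg G v}.ncard

/-- Edge distance: the number of edges in the symmetric difference of the edge sets. -/
def edgeDist (G G' : SimpleGraph V) : ℕ :=
  (G.edgeSet ∆ G'.edgeSet).ncard

/-- Lexicographic key of an edge: the unordered pair written with its smaller endpoint first,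
compared lexicographically. -/
def edgeKey [LinearOrder V] (e : Sym2 V) : Lex (V × V) :=
  Sym2.lift ⟨fun a b => toLex (min a b, max a b), fun a b => by simp only []; rw [min_comm, max_comm]⟩ e

/-- `e` is among the `τ` smallest edges (in the fixed lexicographic order) incident to `v`
in `G`. -/
def clipKeep [Fintype V] [LinearOrder V] (G : SimpleGraph V) (τ : ℕ) (v : V)
    (e : Sym2 V) : Prop :=
  {e' ∈ G.incidenceSet v | edgeKey e' ≤ edgeKey e}.ncard ≤ τ

/-- The clipped graph `Clip G τ`: an edge of `G` is retained iff, for each of its two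
endpoints `v`, it is among the `τ` smallest edges incident to `v` in `G`. -/
def Clip [Fintype V] [LinearOrder V] (G : SimpleGraph V) (τ : ℕ) : SimpleGraph V where
  Adj a b := G.Adj a b ∧ clipKeep G τ a s(a, b) ∧ clipKeep G τ b s(a, b)
  symm := by
    constructor
    intro a b h
    refine ⟨h.1.symm, ?_, ?_⟩
    · rw [Sym2.eq_swap]; exact h.2.2
    · rw [Sym2.eq_swap]; exact h.2.1
  loopless := ⟨fun a h => G.loopless.irrefl a h.1⟩

/-- Naive clipping: delete every edge having at least one endpoint of degree `> τ` in `G`. -/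
def NaiveClip [Fintype V] (G : SimpleGraph V) (τ : ℕ) : SimpleGraph V where
  Adj a b := G.Adj a b ∧ deg G a ≤ τ ∧ deg G b ≤ τ
  symm := ⟨fun _ _ h => ⟨h.1.symm, h.2.2, h.2.1⟩⟩
  loopless := ⟨fun a h => G.loopless.irrefl a h.1⟩

/-- The graph obtained from `G` by deleting all vertices in `S` together with their
incident edges. -/
def deleteVerts (G : SimpleGraph V) (S : Set V) : SimpleGraph V where
  Adj a b := G.Adj a b ∧ a ∉ S ∧ b ∉ S
  symm := ⟨fun _ _ h => ⟨h.1.symm, h.2.2, h.2.1⟩⟩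
  loopless := ⟨fun a h => G.loopless.irrefl a h.1⟩

/-- `DelN G τ`: the minimum cardinality of a vertex set whose deletion bounds the maximum
degree of `G` by `τ`. (The paper's `Q_Del-N(G, τ)` equals `-DelN G τ`.) -/
def DelN [Fintype V] (G : SimpleGraph V) (τ : ℕ) : ℕ :=
  sInf {n | ∃ S : Set V, S.ncard = n ∧ maxDeg (deleteVerts G S) ≤ τ}

/-- Total excess of vertex degrees over `τ`. (The paper's `Q_Del-Deg(G, τ)` equals
`-fExcess G τ / 2`.) -/
def fExcess [Fintype V] (G : SimpleGraph V) (τ : ℕ) : ℕ :=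
  ∑ v, (deg G v - τ)

/-- A `τ`-feasible pair `(x, y)` for the LP relaxation of node deletion. -/
structure IsFeasible [Fintype V] (G : SimpleGraph V) (τ : ℕ) (x : V → ℝ)
    (y : Sym2 V → ℝ) : Prop where
  x_mem : ∀ v, x v ∈ Set.Icc (0 : ℝ) 1
  y_mem : ∀ e ∈ G.edgeSet, y e ∈ Set.Icc (0 : ℝ) 1
  edge_cons : ∀ a b, G.Adj a b → 1 - x a - x b ≤ y s(a, b)
  deg_cons : ∀ v, ∑ᶠ e ∈ G.incidenceSet v, y e ≤ (τ : ℝ)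

/-- The LP value: infimum of `Σ_v x_v` over all `τ`-feasible pairs.
(The paper's `Q_LP-Del-N(G, τ)` equals `-LPDelN G τ`.) -/
def LPDelN [Fintype V] (G : SimpleGraph V) (τ : ℕ) : ℝ :=
  sInf {t : ℝ | ∃ x y, IsFeasible G τ x y ∧ t = ∑ v, x v}

/-!
Every degree of `G` is at most `τ`, so naive clipping keeps all of `G`. Joining `u` to every
other vertex raises each of those degrees to `τ + 1`, and every edge of `G'` has such an
endpoint, so naive clipping deletes all of `G'`. The distance is then the number of edges of `G`,
which by the handshake lemma is `(|V| - 1) τ / 2`.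
-/

open Finset SimpleGraph

section Degree

variable [Fintype V]

theorem deg_eq_degree (G : SimpleGraph V) (v : V) [Fintype (G.neighborSet v)] :
    deg G v = G.degree v := by
  rw [deg, Set.ncard_eq_toFinset_card', ← card_neighborSet_eq_degree, Set.toFinset_card]

theorem not_adj_of_deg_eq_zero {G : SimpleGraph V} {u : V} (hu : deg G u = 0) (w : V) :
    ¬ G.Adj u w := by
  rw [deg, Set.ncard_eq_zero (Set.toFinite _)] at hu
  exact fun h => (Set.eq_empty_iff_forall_notMem.mp hu) w h

theorem two_mul_ncard_edgeSet (G : SimpleGraph V) :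
    2 * G.edgeSet.ncard = ∑ v, deg G v := by
  classical
  rw [← coe_edgeFinset, Set.ncard_coe_finset, ← sum_degrees_eq_twice_card_edges]
  exact sum_congr rfl fun v _ => (deg_eq_degree G v).symm

theorem sum_deg_eq_card_sub_one_mul {G : SimpleGraph V} {u : V} {τ : ℕ} (hu : deg G u = 0)
    (hdeg : ∀ v, v ≠ u → deg G v = τ) : ∑ v, deg G v = (Fintype.card V - 1) * τ := by
  classical
  rw [← sum_erase_add _ _ (mem_univ u), hu, add_zero,
    sum_congr rfl fun v hv => hdeg v (ne_of_mem_erase hv), sum_const, smul_eq_mul,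
    card_erase_of_mem (mem_univ u), card_univ]

theorem deg_eq_add_one_of_neighborSet_eq_insert {G G' : SimpleGraph V} {u v : V}
    (h : G'.neighborSet v = insert u (G.neighborSet v)) (hvu : ¬ G.Adj v u) :
    deg G' v = deg G v + 1 := by
  unfold deg
  rw [h, Set.ncard_insert_of_notMem (s := G.neighborSet v) hvu]

theorem naiveClip_eq_self {G : SimpleGraph V} {τ : ℕ} (h : ∀ v, deg G v ≤ τ) :
    NaiveClip G τ = G := by
  ext a b
  exact ⟨fun hab => hab.1, fun hab => ⟨hab, h a, h b⟩⟩

theorem naiveClip_eq_bot {G : SimpleGraph V} {τ : ℕ}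
    (h : ∀ a b, G.Adj a b → τ < deg G a ∨ τ < deg G b) : NaiveClip G τ = ⊥ := by
  ext a b
  simp only [NaiveClip, bot_adj, iff_false, not_and, not_le]
  exact fun hab ha => (h a b hab).resolve_left (not_lt.mpr ha)

end Degree

theorem edgeDist_bot_right (G : SimpleGraph V) : edgeDist G ⊥ = G.edgeSet.ncard := by
  rw [edgeDist, edgeSet_bot, ← Set.bot_eq_empty, symmDiff_bot]

theorem naiveClip_not_distance_preserving_general [Fintype V]
    (G G' : SimpleGraph V) (u : V) (τ : ℕ)
    (hu : deg G u = 0)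
    (hdeg : ∀ v : V, v ≠ u → deg G v = τ)
    (hG' : ∀ a b : V, G'.Adj a b ↔ G.Adj a b ∨ (a = u ∧ b ≠ u) ∨ (b = u ∧ a ≠ u)) :
    NaiveClip G τ = G ∧ NaiveClip G' τ = ⊥ ∧
      edgeDist (NaiveClip G τ) (NaiveClip G' τ) = (Fintype.card V - 1) * τ / 2 := by
  have hle : ∀ v, deg G v ≤ τ := fun v => by
    rcases eq_or_ne v u with rfl | hv
    · omega
    · exact (hdeg v hv).le
  have hdeg' : ∀ v, v ≠ u → deg G' v = τ + 1 := fun v hv => by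
    have hnbr : G'.neighborSet v = insert u (G.neighborSet v) := by
      ext w
      simp only [mem_neighborSet, hG', Set.mem_insert_iff]
      grind
    rw [deg_eq_add_one_of_neighborSet_eq_insert hnbr
      fun h => not_adj_of_deg_eq_zero hu v h.symm, hdeg v hv]
  have hclip' : NaiveClip G' τ = ⊥ := naiveClip_eq_bot fun a b hab => by
    rcases eq_or_ne a u with rfl | ha
    · exact .inr (by rw [hdeg' b (G'.ne_of_adj hab).symm]; omega)
    · exact .inl (by rw [hdeg' a ha]; omega)
  refine ⟨naiveClip_eq_self hle, hclip', ?_⟩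
  have hedges := two_mul_ncard_edgeSet G
  rw [sum_deg_eq_card_sub_one_mul hu hdeg] at hedges
  rw [naiveClip_eq_self hle, hclip', edgeDist_bot_right]
  omega

/-- Let `τ ≥ 1`, let `u` be isolated in `G` and every other vertex have
degree exactly `τ`, and let `G'` add to `G` the edge `{u, v}` for every `v ≠ u`. Then
`NaiveClip G τ = G`, `NaiveClip G' τ` has no edges, and the edge distance between the two
naively clipped graphs is `(|V| - 1) · τ / 2`: naive clipping is not distance-preserving
between node-neighboring graphs. -/
theorem naiveClip_not_distance_preserving [Fintype V]
    (G G' : SimpleGraph V) (u : V) (τ : ℕ) (hτ : 1 ≤ τ)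
    (hu : deg G u = 0)
    (hdeg : ∀ v : V, v ≠ u → deg G v = τ)
    (hG' : ∀ a b : V, G'.Adj a b ↔ G.Adj a b ∨ (a = u ∧ b ≠ u) ∨ (b = u ∧ a ≠ u)) :
    NaiveClip G τ = G ∧ NaiveClip G' τ = ⊥ ∧
      edgeDist (NaiveClip G τ) (NaiveClip G' τ) = (Fintype.card V - 1) * τ / 2 :=
  naiveClip_not_distance_preserving_general G G' u τ hu hdeg hG'

end
end

section
/- Let G = (V, E) be a graph and τ ∈ ℕ. For every τ-feasible pair (x, y) for G, one has DelN(G, 3τ) ≤ 3 · Σ_{v ∈ V} x_v. -/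
/-
Threshold rounding at `1/3`: delete `S = {v | x v ≥ 1/3}`, so that `|S| ≤ 3 Σ x` by Markov's
inequality. An edge surviving the deletion has both endpoints with `x < 1/3`, hence `y > 1/3`
by the edge constraint, and the degree constraint `Σ_{e ∋ v} y_e ≤ τ` leaves room for at most
`3τ` such edges at any vertex.
-/

open scoped symmDiff

variable {V : Type*}

noncomputable section

lemma deleteVerts_le (G : SimpleGraph V) (S : Set V) : deleteVerts G S ≤ G :=
  fun _ _ h => h.1

section
variable [Fintype V]

lemma maxDeg_le {G : SimpleGraph V} {k : ℕ} (h : ∀ v, deg G v ≤ k) : maxDeg G ≤ k :=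
  Finset.sup_le fun v _ => h v

lemma delN_le_ncard {G : SimpleGraph V} {k : ℕ} {S : Set V} (h : maxDeg (deleteVerts G S) ≤ k) :
    DelN G k ≤ S.ncard :=
  Nat.sInf_le ⟨S, rfl, h⟩

lemma ncard_incidenceSet (G : SimpleGraph V) (v : V) : (G.incidenceSet v).ncard = deg G v := by
  classical exact Nat.card_congr (G.incidenceSetEquivNeighborSet v)

lemma ncard_setOf_le_mul_le_sum {f : V → ℝ} (hf : ∀ v, 0 ≤ f v) (c : ℝ) :
    ({v | c ≤ f v}.ncard : ℝ) * c ≤ ∑ v, f v := by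
  classical
  rw [Set.ncard_eq_toFinset_card', Set.toFinset_ofPred, ← nsmul_eq_mul]
  exact (Finset.card_nsmul_le_sum _ f c fun v hv => (Finset.mem_filter.1 hv).2).trans
    (Finset.sum_le_sum_of_subset_of_nonneg (Finset.subset_univ _) fun v _ _ => hf v)

lemma deg_mul_le_finsum_incidenceSet {G H : SimpleGraph V} (hHG : H ≤ G) {v : V}
    {y : Sym2 V → ℝ} {c : ℝ} (hy : ∀ e ∈ G.incidenceSet v, 0 ≤ y e)
    (hc : ∀ u, H.Adj v u → c ≤ y s(v, u)) :
    deg H v * c ≤ ∑ᶠ e ∈ G.incidenceSet v, y e := by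
  classical
  have hsub : H.incidenceSet v ⊆ G.incidenceSet v :=
    fun e he => ⟨SimpleGraph.edgeSet_mono hHG he.1, he.2⟩
  rw [← ncard_incidenceSet, Set.ncard_eq_toFinset_card', finsum_mem_eq_toFinset_sum,
    ← nsmul_eq_mul]
  refine (Finset.card_nsmul_le_sum _ y c fun e he => ?_).trans
    (Finset.sum_le_sum_of_subset_of_nonneg (Set.toFinset_subset_toFinset.2 hsub)
      fun e he _ => hy e (Set.mem_toFinset.1 he))
  obtain ⟨u, rfl⟩ := Sym2.mem_iff_exists.1 (Set.mem_toFinset.1 he).2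
  exact hc u ((H.mem_incidenceSet v u).1 (Set.mem_toFinset.1 he))

end

/-- For every `τ`-feasible pair `(x, y)` for `G`,
`DelN(G, 3τ) ≤ 3 Σ_v x_v`. -/
theorem delN_le_of_feasible [Fintype V] (G : SimpleGraph V) (τ : ℕ)
    (x : V → ℝ) (y : Sym2 V → ℝ) (hf : IsFeasible G τ x y) :
    (DelN G (3 * τ) : ℝ) ≤ 3 * ∑ v, x v := by
  set S : Set V := {v | 1 / 3 ≤ x v}
  have hdeg : ∀ v, deg (deleteVerts G S) v ≤ 3 * τ := by
    intro v
    have hweight : ∀ u, (deleteVerts G S).Adj v u → 1 / 3 ≤ y s(v, u) := by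
      rintro u ⟨hvu, hv, hu⟩
      simp only [S, Set.mem_ofPred_eq, not_le] at hv hu
      linarith [hf.edge_cons v u hvu]
    have hmass := deg_mul_le_finsum_incidenceSet (deleteVerts_le G S)
      (fun e he => (hf.y_mem e he.1).1) hweight
    have hreal : (deg (deleteVerts G S) v : ℝ) ≤ 3 * τ := by linarith [hf.deg_cons v]
    exact_mod_cast hreal
  calc (DelN G (3 * τ) : ℝ) ≤ S.ncard := by exact_mod_cast delN_le_ncard (maxDeg_le hdeg)
    _ ≤ 3 * ∑ v, x v := by
      linarith [ncard_setOf_le_mul_le_sum (fun v => (hf.x_mem v).1) (1 / 3)]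

end
end
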